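/- arXiv:math/0503309 — 5 statements merged into one kernel-verified Lean document; each statement's English description precedes it below -/
import Mathlib

section
/- Let V be a finite-dimensional complex vector space with a nondegenerate symmetric bilinear form B, and let H ≤ G be subgroups of GL(V) such that every element g of G satisfies B(g v, g w) = B(v, w) for all v, w ∈ V. Assume that every H-invariant quadratic form Q on V (i.e. Q(h v) = Q(v) for all h ∈ H, v ∈ V) is G-invariant. If W is a subspace of V that is invariant under every element of H and on which the restriction of B is nondegenerate, then W is invariant under every element of G. -/
open LinearMap (BilinForm)

/-! Let `p` be the projection onto `W` along its `B`-orthogonal `Wᗮ`. As `H` preserves `B` and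
`W`, it preserves `Wᗮ` and commutes with `p`, so the quadratic form `v ↦ B (p v) (p v)` is
`H`-invariant, hence `G`-invariant. By polarization `G` then preserves the bilinear form
`B (p v) (p x) = B v (p x)`, and for `g ∈ G`, `w ∈ W` this gives
`B (g y) (g w) = B y w = B y (p w) = B (g y) (p (g w))` for every `y`. Thus `g w - p (g w)` lies in
the radical of `B`, which is zero, and `g w = p (g w) ∈ W`. -/

namespace Submodule

variable {R E : Type*} [Ring R] [AddCommGroup E] [Module R E]

theorem projection_apply_comm {p q : Submodule R E} (hpq : IsCompl p q) {f : E →ₗ[R] E}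
    (hp : ∀ x ∈ p, f x ∈ p) (hq : ∀ x ∈ q, f x ∈ q) (x : E) :
    p.projection q hpq (f x) = f (p.projection q hpq x) := by
  have hcomm : Commute (p.projection q hpq) f := by
    rw [LinearMap.IsIdempotentElem.commute_iff (isIdempotentElem_projection hpq),
      range_projection, ker_projection]
    exact ⟨(Module.End.mem_invtSubmodule _).2 hp, (Module.End.mem_invtSubmodule _).2 hq⟩
  exact LinearMap.congr_fun hcomm.eq x

end Submodule

namespace LinearMap.BilinForm

variable {R M : Type*} [CommRing R] [AddCommGroup M] [Module R M]

theorem IsSymm.compl₁₂_eq_of_toQuadraticMap_comp_eq [Invertible (2 : R)] {β : BilinForm R M}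
    (hβ : β.IsSymm) {f : M →ₗ[R] M} (hf : β.toQuadraticMap.comp f = β.toQuadraticMap) :
    β.compl₁₂ f f = β := by
  rw [← QuadraticMap.associated_left_inverse R hβ.eq, ← QuadraticMap.associated_comp, hf]

theorem apply_mem_orthogonal {B : BilinForm R M} {W : Submodule R M} {g : M ≃ₗ[R] M}
    (hg : ∀ v w, B (g v) (g w) = B v w) (hW : ∀ w ∈ W, g.symm w ∈ W) {u : M}
    (hu : u ∈ B.orthogonal W) : g u ∈ B.orthogonal W := fun w hw => by
  rw [← g.apply_symm_apply w, hg]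
  exact hu _ (hW w hw)

variable {B : BilinForm R M} {W : Submodule R M}

theorem apply_projection_orthogonal_left (hB : B.IsRefl) (hW : IsCompl W (B.orthogonal W))
    (v : M) {w : M} (hw : w ∈ W) : B (W.projection _ hW v) w = B v w := by
  have hperp : B (v - W.projection _ hW v) w = 0 := hB _ _ (W.sub_projection_mem hW v w hw)
  rwa [sub_left, sub_eq_zero, eq_comm] at hperp

theorem compl₁₂_projection_orthogonal (hB : B.IsRefl) (hW : IsCompl W (B.orthogonal W)) :
    B.compl₁₂ (W.projection _ hW) (W.projection _ hW) = B.compl₂ (W.projection _ hW) :=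
  LinearMap.ext₂ fun v x =>
    apply_projection_orthogonal_left hB hW v (W.projection_apply_mem hW x)

end LinearMap.BilinForm

open LinearMap.BilinForm LinearMap.BilinMap in
/-- Lemma "submodules": if `H ≤ G ≤ O(V, B)` have the same invariant quadratic
forms, then any `H`-invariant subspace on which `B` is nondegenerate is
`G`-invariant. -/
theorem nondegenerate_H_submodule_is_G_submodule
    (V : Type*) [AddCommGroup V] [Module ℂ V] [FiniteDimensional ℂ V]
    (B : BilinForm ℂ V) (hBnd : B.Nondegenerate) (hBsymm : B.IsSymm)
    (H G : Subgroup (V ≃ₗ[ℂ] V)) (hHG : H ≤ G)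
    (hGorth : ∀ g ∈ G, ∀ v w : V, B (g v) (g w) = B v w)
    (hinv : ∀ Q : QuadraticForm ℂ V,
      (∀ h ∈ H, ∀ v : V, Q (h v) = Q v) → (∀ g ∈ G, ∀ v : V, Q (g v) = Q v))
    (W : Submodule ℂ V) (hWnd : (B.restrict W).Nondegenerate)
    (hWH : ∀ h ∈ H, ∀ w ∈ W, h w ∈ W) :
    ∀ g ∈ G, ∀ w ∈ W, g w ∈ W := by
  have hWc := B.isCompl_orthogonal_of_restrict_nondegenerate hBsymm.isRefl hWnd
  set p := W.projection (B.orthogonal W) hWc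
  have hpH : ∀ h ∈ H, ∀ v, p (h v) = h (p v) := fun h hh =>
    W.projection_apply_comm hWc (hWH h hh) fun _ =>
      apply_mem_orthogonal (hGorth h (hHG hh)) (hWH h⁻¹ (inv_mem hh))
  have hQH : ∀ h ∈ H, ∀ v,
      toQuadraticMap (B.compl₁₂ p p) (h v) = toQuadraticMap (B.compl₁₂ p p) v := fun h hh v => by
    simp only [toQuadraticMap_apply, LinearMap.compl₁₂_apply, hpH h hh, hGorth h (hHG hh)]
  have hpG : ∀ g ∈ G, ∀ v x, B (g v) (p (g x)) = B v (p x) := fun g hg v x => by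
    have hBp : IsSymm (B.compl₁₂ p p) := ⟨fun x y => hBsymm.eq (p x) (p y)⟩
    have := IsSymm.compl₁₂_eq_of_toQuadraticMap_comp_eq hBp (f := (g : V →ₗ[ℂ] V))
      (QuadraticMap.ext (hinv _ hQH g hg))
    rw [compl₁₂_projection_orthogonal hBsymm.isRefl hWc] at this
    exact LinearMap.congr_fun₂ this v x
  intro g hg w hw
  have hgw : ∀ y, B (g y) (g w) = B (g y) (p (g w)) := fun y => by
    rw [hpG g hg, hGorth g hg, W.projection_apply_of_mem_left hWc hw]
  have hperp : g w - p (g w) = 0 := hBnd.2 _ fun z => by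
    rw [← g.apply_symm_apply z, map_sub, hgw, sub_self]
  rw [sub_eq_zero.1 hperp]
  exact W.projection_apply_mem hWc _
end

section
/- Let E be a real inner product space, let α₁, …, α_k ∈ E be a finite family of vectors (the 'simple roots'), and let Λ, M ∈ E. Assume: ⟨Λ, αᵢ⟩ ≥ 0 for all i (Λ is dominant); M = Σᵢ cᵢ αᵢ with all cᵢ ≥ 0 (M is a nonnegative combination of simple roots); M ≠ 0; and ⟨Λ − M, αᵢ⟩ ≥ 0 for all i (Λ − M is dominant). Then ⟨Λ − M, Λ − M⟩ < ⟨Λ, Λ⟩. -/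
open scoped RealInnerProductSpace

/-- Weight-geometry inequality from the proof of Proposition "diagonal": if `Λ`
and `Λ − M` are dominant and `M ≠ 0` is a nonnegative combination of the simple
roots, then `‖Λ − M‖² < ‖Λ‖²`. -/
theorem dominant_weight_strict_inequality
    (E : Type*) [NormedAddCommGroup E] [InnerProductSpace ℝ E]
    (k : ℕ) (α : Fin k → E) (Λ M : E) (c : Fin k → ℝ)
    (hΛdom : ∀ i, 0 ≤ ⟪Λ, α i⟫)
    (hc : ∀ i, 0 ≤ c i)
    (hM : M = ∑ i, c i • α i)
    (hM0 : M ≠ 0)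
    (hΛMdom : ∀ i, 0 ≤ ⟪Λ - M, α i⟫) :
    ⟪Λ - M, Λ - M⟫ < ⟪Λ, Λ⟫ := by
  have h1 : 0 ≤ ⟪Λ - M, M⟫ := by
    nth_rewrite 2 [hM]
    rw [inner_sum]
    apply Finset.sum_nonneg
    intro i _
    rw [real_inner_smul_right]
    exact mul_nonneg (hc i) (hΛMdom i)
  have hMM : 0 < ⟪M, M⟫ := by
    rw [real_inner_self_eq_norm_sq]
    have := norm_pos_iff.mpr hM0
    positivity
  have h2 : 0 < ⟪Λ, M⟫ := by
    have : ⟪Λ, M⟫ = ⟪Λ - M, M⟫ + ⟪M, M⟫ := by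
      rw [inner_sub_left]; ring
    linarith
  have expand : ⟪Λ - M, Λ - M⟫ = ⟪Λ, Λ⟫ - ⟪Λ, M⟫ - ⟪Λ - M, M⟫ := by
    simp only [inner_sub_left, inner_sub_right, real_inner_comm Λ M]
  linarith
end

section
/- Let n ≥ 1 and let P be a multivariate polynomial over ℂ in 2n variables (indexed by Fin n ⊕ Fin n). Suppose P is invariant under the complex symplectic group: for every matrix g in the symplectic group Sp(2n, ℂ) (matrices over the index type Fin n ⊕ Fin n preserving the standard symplectic matrix J) and every vector v : (Fin n ⊕ Fin n) → ℂ, evaluating P at g.mulVec v gives the same value as evaluating P at v. Then P is a constant polynomial: there exists c ∈ ℂ with P = C c. -/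
open Matrix MvPolynomial

/-- existence of a symmetric matrix sending a vector with a nonzero coordinate
to any prescribed vector. -/
lemma exists_symm_mulVec {n : ℕ} (x w : Fin n → ℂ) (i : Fin n) (hx : x i ≠ 0) :
    ∃ C : Matrix (Fin n) (Fin n) ℂ, Cᵀ = C ∧ C.mulVec x = w := by
  set e : Fin n → ℂ := Pi.single i 1 with he
  refine ⟨(x i)⁻¹ • (vecMulVec e w + vecMulVec w e) +
      (-((x i)⁻¹ * (x i)⁻¹ * (w ⬝ᵥ x))) • vecMulVec e e, ?_, ?_⟩
  · ext a b
    simp only [Matrix.transpose_apply, Matrix.add_apply, Matrix.smul_apply, vecMulVec]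
    simp only [Matrix.of_apply, smul_eq_mul]
    ring
  · have hvm : ∀ a b : Fin n → ℂ, (vecMulVec a b).mulVec x = (b ⬝ᵥ x) • a := by
      intro a b
      ext j
      simp only [vecMulVec, mulVec, dotProduct, Matrix.of_apply, Pi.smul_apply, smul_eq_mul]
      rw [Finset.sum_mul]
      exact Finset.sum_congr rfl fun k _ => by ring
    have hex : e ⬝ᵥ x = x i := by simp [he, dotProduct, Pi.single_apply]
    ext j
    simp only [Matrix.add_mulVec, Matrix.smul_mulVec, hvm, hex]
    simp only [Pi.add_apply, Pi.smul_apply, smul_eq_mul]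
    rcases eq_or_ne j i with rfl | hj
    · simp [he]
      field_simp
      ring
    · simp [he, Pi.single_apply, hj]
      field_simp

lemma lower_mem {n : ℕ} (C : Matrix (Fin n) (Fin n) ℂ) (hC : Cᵀ = C) :
    Matrix.fromBlocks 1 0 C 1 ∈ Matrix.symplecticGroup (Fin n) ℂ := by
  rw [SymplecticGroup.mem_iff, Matrix.J, fromBlocks_multiply, fromBlocks_transpose,
    fromBlocks_multiply]
  simp [hC]

lemma lower_mulVec {n : ℕ} (C : Matrix (Fin n) (Fin n) ℂ) (x y : Fin n → ℂ) :
    (Matrix.fromBlocks (1 : Matrix (Fin n) (Fin n) ℂ) 0 C 1).mulVec (Sum.elim x y)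
      = Sum.elim x (C.mulVec x + y) := by
  simp [fromBlocks_mulVec]

lemma J_mulVec {n : ℕ} (x y : Fin n → ℂ) :
    (Matrix.J (Fin n) ℂ).mulVec (Sum.elim x y) = Sum.elim (-y) x := by
  simp [Matrix.J, fromBlocks_mulVec, Matrix.neg_mulVec]

/-- A polynomial in `2n` variables invariant under the complex symplectic group
`Sp(2n, ℂ)` is constant. -/
theorem symplectic_invariant_polynomial_is_constant
    (n : ℕ) (hn : 1 ≤ n) (P : MvPolynomial (Fin n ⊕ Fin n) ℂ)
    (hinv : ∀ g ∈ Matrix.symplecticGroup (Fin n) ℂ, ∀ v : (Fin n ⊕ Fin n) → ℂ,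
      MvPolynomial.eval (g.mulVec v) P = MvPolynomial.eval v P) :
    ∃ c : ℂ, P = MvPolynomial.C c := by
  set i0 : Fin n := ⟨0, hn⟩ with hi0
  set e0 : Fin n → ℂ := Pi.single i0 1 with he0
  have he0ne : e0 i0 ≠ 0 := by simp [he0]
  set t : Fin n ⊕ Fin n → ℂ := Sum.elim (-e0) 0 with ht
  set c : ℂ := MvPolynomial.eval t P with hc
  -- step lemma: applying a lower transvection
  have hstep : ∀ (x y : Fin n → ℂ) (C : Matrix (Fin n) (Fin n) ℂ), Cᵀ = C →
      MvPolynomial.eval (Sum.elim x y) P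
        = MvPolynomial.eval (Sum.elim x (C.mulVec x + y)) P := by
    intro x y C hC
    rw [← lower_mulVec C x y, hinv _ (lower_mem C hC)]
  have hJstep : ∀ (x y : Fin n → ℂ),
      MvPolynomial.eval (Sum.elim x y) P = MvPolynomial.eval (Sum.elim (-y) x) P := by
    intro x y
    rw [← J_mulVec x y, hinv _ (SymplecticGroup.J_mem _ _)]
  -- key: any point with nonzero first block component evaluates to c
  have key : ∀ (x y : Fin n → ℂ) (i : Fin n), x i ≠ 0 →
      MvPolynomial.eval (Sum.elim x y) P = c := by
    intro x y i hx
    obtain ⟨C₁, hC₁s, hC₁⟩ := exists_symm_mulVec x (e0 - y) i hx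
    have h1 : MvPolynomial.eval (Sum.elim x y) P
        = MvPolynomial.eval (Sum.elim x e0) P := by
      rw [hstep x y C₁ hC₁s, hC₁, sub_add_cancel]
    have h2 : MvPolynomial.eval (Sum.elim x e0) P
        = MvPolynomial.eval (Sum.elim (-e0) x) P := hJstep x e0
    have hne : (-e0) i0 ≠ 0 := by simpa using he0ne
    obtain ⟨C₂, hC₂s, hC₂⟩ := exists_symm_mulVec (-e0) (-x) i0 hne
    have h3 : MvPolynomial.eval (Sum.elim (-e0) x) P = c := by
      rw [hstep (-e0) x C₂ hC₂s, hC₂, hc, ht, neg_add_cancel]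
    rw [h1, h2, h3]
  -- all nonzero points evaluate to c
  have hall : ∀ v : Fin n ⊕ Fin n → ℂ, v ≠ 0 → MvPolynomial.eval v P = c := by
    intro v hv
    have hveq : v = Sum.elim (v ∘ Sum.inl) (v ∘ Sum.inr) := by
      ext (a | a) <;> rfl
    by_cases hx : ∃ i, v (Sum.inl i) ≠ 0
    · obtain ⟨i, hi⟩ := hx
      rw [hveq]
      exact key _ _ i hi
    · push_neg at hx
      have hy : ∃ i, v (Sum.inr i) ≠ 0 := by
        by_contra h
        push_neg at h
        apply hv
        ext (a | a)
        · exact hx a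
        · exact h a
      obtain ⟨i, hi⟩ := hy
      rw [hveq, hJstep]
      exact key _ _ i (by simpa using hi)
  -- conclude P is constant using Zariski density argument
  refine ⟨c, ?_⟩
  have hX : (MvPolynomial.X (Sum.inl i0) : MvPolynomial (Fin n ⊕ Fin n) ℂ) *
      (P - MvPolynomial.C c) = 0 := by
    apply MvPolynomial.funext
    intro v
    rcases eq_or_ne v 0 with rfl | hv
    · simp
    · simp [hall v hv]
  have hXne : (MvPolynomial.X (Sum.inl i0) : MvPolynomial (Fin n ⊕ Fin n) ℂ) ≠ 0 :=
    MvPolynomial.X_ne_zero _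
  have := mul_eq_zero.mp hX
  rcases this with h | h
  · exact absurd h hXne
  · exact sub_eq_zero.mp h
end

section
/- Let V be a finite-dimensional complex vector space with a nondegenerate alternating bilinear form ω, let e ∈ V be nonzero, and let U be a hyperplane of V with V = U ⊕ ℂ·e. Then every linear automorphism g of V with determinant 1 factors as g = s ∘ h, where s is a symplectic automorphism of (V, ω) (hence det s = 1) and h is a linear automorphism of V with determinant 1 satisfying h(e) = e and h(U) = U. (Group factorization SL(V) = Sp(V) · SL_{dim V − 1}.) -/
/-!
Write `U = ker f` with `f e = 1`. Then `h = s⁻¹ g` fixes `e` and preserves `f` (hence `U`) as soon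
as `s e = g e` and `f ∘ s⁻¹ ∘ g = f`; through the duality `V ≃ V*` given by `ω`, the second
condition says that `s` maps the `ω`-dual `w` of `f` to the `ω`-dual `w'` of `f ∘ g⁻¹`. Since
`ω w e = ω w' (g e) = 1`, it remains to see that symplectic transvections `x ↦ x + c ω(u, x) u`,
which have determinant one, act transitively on such hyperbolic pairs.
-/

open LinearMap (BilinForm)

theorem LinearMap.exists_apply_ne_zero_and_apply_ne_zero {R M N P : Type*} [Semiring R]
    [AddCommMonoid M] [AddCommMonoid N] [AddCommMonoid P] [Module R M] [Module R N] [Module R P]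
    {f : M →ₗ[R] N} {g : M →ₗ[R] P} (hf : f ≠ 0) (hg : g ≠ 0) : ∃ z, f z ≠ 0 ∧ g z ≠ 0 := by
  obtain ⟨a, ha⟩ := DFunLike.ne_iff.mp hf
  obtain ⟨b, hb⟩ := DFunLike.ne_iff.mp hg
  by_cases hga : g a = 0
  · by_cases hfb : f b = 0
    · exact ⟨a + b, by simpa [hfb] using ha, by simpa [hga] using hb⟩
    · exact ⟨b, hfb, hb⟩
  · exact ⟨a, ha, hga⟩

theorem Submodule.exists_dual_ker_eq_of_isCompl_span {K V : Type*} [Field K] [AddCommGroup V]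
    [Module K V] {U : Submodule K V} {e : V} (he : e ≠ 0) (hc : IsCompl U (K ∙ e)) :
    ∃ f : Module.Dual K V, f e = 1 ∧ LinearMap.ker f = U := by
  refine ⟨LinearEquiv.coord K V e he ∘ₗ (K ∙ e).projectionOnto U hc.symm, ?_, ?_⟩
  · simp [projectionOnto_apply_of_mem_left hc.symm (mem_span_singleton_self e),
      LinearEquiv.coord_self]
  · rw [LinearEquiv.ker_comp, ker_projectionOnto]

theorem LinearMap.map_ker_of_comp_eq {R V W : Type*} [Semiring R] [AddCommMonoid V]
    [Module R V] [AddCommMonoid W] [Module R W] {f : V →ₗ[R] W} {h : V ≃ₗ[R] V} (hf : f ∘ₗ h = f) :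
    (ker f).map (h : V →ₗ[R] V) = ker f := by
  rw [Submodule.map_equiv_eq_comap_symm, ← ker_comp]
  congr 1
  ext v
  simpa using (LinearMap.congr_fun hf (h.symm v)).symm

namespace LinearMap.BilinForm

section CommRing

variable {R V : Type*} [CommRing R] [AddCommGroup V] [Module R V] (ω : BilinForm R V)

def specialIsometryGroup : Subgroup (V ≃ₗ[R] V) where
  carrier := {s | (∀ a b, ω (s a) (s b) = ω a b) ∧ LinearEquiv.det s = 1}
  mul_mem' {s t} hs ht := ⟨fun a b ↦ by simp [hs.1, ht.1], by simp [hs.2, ht.2]⟩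
  one_mem' := ⟨fun _ _ ↦ rfl, map_one _⟩
  inv_mem' {s} hs := ⟨fun a b ↦ by simpa using (hs.1 (s.symm a) (s.symm b)).symm, by simp [hs.2]⟩

variable {ω}

theorem det_of_mem_specialIsometryGroup {s : V ≃ₗ[R] V} (hs : s ∈ ω.specialIsometryGroup) :
    LinearMap.det (s : V →ₗ[R] V) = 1 := by
  rw [← LinearEquiv.coe_det, hs.2, Units.val_one]

variable (hω : ω.IsAlt)

def symplecticTransvection (u : V) (c : R) : V ≃ₗ[R] V :=
  LinearEquiv.transvection (f := c • ω u) (v := u) (by simp [hω.self_eq_zero u])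

theorem symplecticTransvection_apply (u : V) (c : R) (x : V) :
    symplecticTransvection hω u c x = x + (c * ω u x) • u :=
  rfl

theorem symplecticTransvection_mem_specialIsometryGroup (u : V) (c : R) :
    symplecticTransvection hω u c ∈ ω.specialIsometryGroup := by
  refine ⟨fun a b ↦ ?_, LinearEquiv.transvection.det_eq_one _⟩
  simp only [symplecticTransvection_apply, map_add, map_smul, LinearMap.add_apply,
    LinearMap.smul_apply, smul_eq_mul, hω.self_eq_zero u, ← hω.neg_eq u a]
  ring

theorem symplecticTransvection_apply_of_eq_zero {u x : V} (c : R) (hx : ω u x = 0) :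
    symplecticTransvection hω u c x = x := by
  simp [symplecticTransvection_apply, hx]

end CommRing

section Field

variable {K V : Type*} [Field K] [AddCommGroup V] [Module K V] {ω : BilinForm K V}
  (hω : ω.IsAlt)
include hω

theorem symplecticTransvection_sub_apply_self {x y : V} (h : ω y x ≠ 0) :
    symplecticTransvection hω (y - x) (ω y x)⁻¹ x = y := by
  simp [symplecticTransvection_apply, hω.self_eq_zero x, inv_mul_cancel₀ h]

theorem exists_mem_specialIsometryGroup_apply_eq_of_apply_ne_zero {x y : V} (h : ω y x ≠ 0) :
    ∃ s ∈ ω.specialIsometryGroup, s x = y ∧ ∀ v, ω x v = ω y v → s v = v :=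
  ⟨symplecticTransvection hω (y - x) (ω y x)⁻¹,
    symplecticTransvection_mem_specialIsometryGroup hω _ _,
    symplecticTransvection_sub_apply_self hω h,
    fun v hv ↦ symplecticTransvection_apply_of_eq_zero hω _ (by simp [hv])⟩

theorem exists_mem_specialIsometryGroup_apply_eq (hnd : ω.Nondegenerate) {x y : V}
    (hx : x ≠ 0) (hy : y ≠ 0) : ∃ s ∈ ω.specialIsometryGroup, s x = y := by
  have hωx : ω.flip x ≠ 0 := fun h ↦ hx (hnd.2 x fun z ↦ LinearMap.congr_fun h z)
  have hωy : ω y ≠ 0 := fun h ↦ hy (hnd.1 y fun z ↦ LinearMap.congr_fun h z)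
  obtain ⟨z, hzx, hyz⟩ := LinearMap.exists_apply_ne_zero_and_apply_ne_zero hωx hωy
  obtain ⟨s₁, hs₁, hs₁x, -⟩ := exists_mem_specialIsometryGroup_apply_eq_of_apply_ne_zero hω hzx
  obtain ⟨s₂, hs₂, hs₂z, -⟩ := exists_mem_specialIsometryGroup_apply_eq_of_apply_ne_zero hω hyz
  exact ⟨s₂ * s₁, mul_mem hs₂ hs₁, by simp [hs₁x, hs₂z]⟩

theorem exists_mem_specialIsometryGroup_apply_eq_self_and_apply_eq {x w w' : V}
    (hw : ω w x = 1) (hw' : ω w' x = 1) :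
    ∃ s ∈ ω.specialIsometryGroup, s x = x ∧ s w = w' := by
  by_cases hw'w : ω w' w = 0
  · set z := w' + x
    have hzw : ω z w ≠ 0 := by simp [z, hw'w, ← hω.neg_eq w x, hw]
    have hw'z : ω w' z ≠ 0 := by simp [z, hω.self_eq_zero w', hw']
    have hzx : ω z x = 1 := by simp [z, hω.self_eq_zero x, hw']
    obtain ⟨s₁, hs₁, hs₁w, hs₁fix⟩ :=
      exists_mem_specialIsometryGroup_apply_eq_of_apply_ne_zero hω hzw
    obtain ⟨s₂, hs₂, hs₂z, hs₂fix⟩ :=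
      exists_mem_specialIsometryGroup_apply_eq_of_apply_ne_zero hω hw'z
    refine ⟨s₂ * s₁, mul_mem hs₂ hs₁, ?_, by simp [hs₁w, hs₂z]⟩
    simp [hs₁fix x (by rw [hw, hzx]), hs₂fix x (by rw [hzx, hw'])]
  · obtain ⟨s, hs, hsw, hsfix⟩ :=
      exists_mem_specialIsometryGroup_apply_eq_of_apply_ne_zero hω hw'w
    exact ⟨s, hs, hsfix x (by rw [hw, hw']), hsw⟩

theorem exists_mem_specialIsometryGroup_apply_eq_and_apply_eq (hnd : ω.Nondegenerate)
    {x w x' w' : V} (h : ω w x = 1) (h' : ω w' x' = 1) :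
    ∃ s ∈ ω.specialIsometryGroup, s x = x' ∧ s w = w' := by
  have hx : x ≠ 0 := by rintro rfl; simp at h
  have hx' : x' ≠ 0 := by rintro rfl; simp at h'
  obtain ⟨s₁, hs₁, hs₁x⟩ := exists_mem_specialIsometryGroup_apply_eq hω hnd hx hx'
  have hs₁w : ω (s₁ w) x' = 1 := by rw [← hs₁x, hs₁.1, h]
  obtain ⟨s₂, hs₂, hs₂x', hs₂w⟩ :=
    exists_mem_specialIsometryGroup_apply_eq_self_and_apply_eq hω hs₁w h'
  exact ⟨s₂ * s₁, mul_mem hs₂ hs₁, by simp [hs₁x, hs₂x'], by simp [hs₂w]⟩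

end Field

end LinearMap.BilinForm

/-- Group factorization `SL(V) = Sp(V) · SL_{dim V − 1}` (first row of
Onishchik's Table O): every determinant-one automorphism `g` of `V` factors as
`g = s ∘ h` with `s` symplectic and `h` of determinant one fixing `e` and
stabilizing the complementary hyperplane `U`. -/
theorem SL_eq_Sp_mul_SL_factorization
    (V : Type*) [AddCommGroup V] [Module ℂ V] [FiniteDimensional ℂ V]
    (ω : BilinForm ℂ V) (halt : ∀ v : V, ω v v = 0) (hnd : ω.Nondegenerate)
    (e : V) (he : e ≠ 0) (U : Submodule ℂ V) (hc : IsCompl U (Submodule.span ℂ {e})) :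
    ∀ g : V ≃ₗ[ℂ] V, LinearMap.det (g : V →ₗ[ℂ] V) = 1 →
      ∃ s h : V ≃ₗ[ℂ] V,
        (∀ a b : V, ω (s a) (s b) = ω a b) ∧
        LinearMap.det (h : V →ₗ[ℂ] V) = 1 ∧
        h e = e ∧
        Submodule.map (h : V →ₗ[ℂ] V) U = U ∧
        ∀ v : V, g v = s (h v) := by
  intro g hg
  obtain ⟨f, hfe, rfl⟩ := Submodule.exists_dual_ker_eq_of_isCompl_span he hc
  obtain ⟨s, hs, hse, hsw⟩ := ω.exists_mem_specialIsometryGroup_apply_eq_and_apply_eq halt hnd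
    (x := e) (w := (ω.toDual hnd).symm f) (x' := g e) (w' := (ω.toDual hnd).symm (f ∘ₗ g.symm))
    (by simp [hfe]) (by simp [hfe])
  have hf : f ∘ₗ (s⁻¹ * g : V ≃ₗ[ℂ] V) = f := by
    ext v
    calc f (s⁻¹ (g v)) = ω ((ω.toDual hnd).symm f) (s⁻¹ (g v)) := by simp
      _ = ω (s ((ω.toDual hnd).symm f)) (g v) := by
        simpa using (hs.1 ((ω.toDual hnd).symm f) (s⁻¹ (g v))).symm
      _ = f v := by simp [hsw]
  refine ⟨s, s⁻¹ * g, hs.1, ?_, by simp [← hse], LinearMap.map_ker_of_comp_eq hf, by simp⟩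
  rw [LinearEquiv.coe_toLinearMap_mul, map_mul, hg, mul_one,
    ω.det_of_mem_specialIsometryGroup (inv_mem hs)]
end

section
/- Let V be a finite-dimensional complex vector space with a nondegenerate alternating bilinear form ω, let e ∈ V be nonzero, and let U be a hyperplane of V with V = U ⊕ ℂ·e. Then every linear endomorphism M of V with trace 0 can be written M = X + Y, where X is a linear endomorphism with ω(X v, w) + ω(v, X w) = 0 for all v, w ∈ V, and Y is a linear endomorphism with Y e = 0, Y(U) ⊆ U, and trace Y = 0. (Lie algebra factorization 𝔰𝔩(V) = 𝔰𝔭(V) + 𝔰𝔩_{dim V − 1}.) -/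
open LinearMap (BilinForm)

/-!
Let `f` be the coordinate functional of `e` (so `f e = 1`, `ker f = U`). It suffices to find an
infinitesimally symplectic `X` with `X e = M e` and `f ∘ X = f ∘ M` on `U`: then `Y = M - X` kills
`e`, preserves `U = ker f`, and has trace `0` because skew-adjoint endomorphisms of a nondegenerate
form are traceless (`X = -D⁻¹ Xᵀ D` with `D` the duality `V ≃ V*`). Such an `X` is an explicit
combination of the skew-adjoint maps `v ↦ ω(x, v) x` and `v ↦ ω(x, v) y + ω(y, v) x`, where
`ω(a, ·) = f` and `ω(c, ·) = f ∘ M - f (M e) • f`.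
-/

namespace LinearMap.BilinForm

section CommRing

variable {R M : Type*} [CommRing R] [AddCommGroup M] [Module R M] {ω : BilinForm R M}

theorem smulRight_self_mem_skewAdjointSubmodule (hω : ω.IsAlt) (x : M) :
    (ω x).smulRight x ∈ ω.skewAdjointSubmodule := by
  rw [mem_skewAdjointSubmodule]
  intro v w
  simp only [smulRight_apply, map_smul, smul_apply, smul_eq_mul, Pi.neg_apply, map_neg,
    ← hω.neg_eq x v]
  ring

theorem smulRight_add_smulRight_mem_skewAdjointSubmodule (hω : ω.IsAlt) (x y : M) :
    (ω x).smulRight y + (ω y).smulRight x ∈ ω.skewAdjointSubmodule := by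
  rw [mem_skewAdjointSubmodule]
  intro v w
  simp only [LinearMap.add_apply, smulRight_apply, map_add, map_smul, smul_apply, smul_eq_mul,
    Pi.neg_apply, map_neg, ← hω.neg_eq x v, ← hω.neg_eq y v]
  ring

end CommRing

variable {K V : Type*} [Field K] [AddCommGroup V] [Module K V] [FiniteDimensional K V]
  {ω : BilinForm K V}

theorem trace_eq_zero_of_mem_skewAdjointSubmodule [NeZero (2 : K)] (hnd : ω.Nondegenerate)
    {X : Module.End K V} (hX : X ∈ ω.skewAdjointSubmodule) : trace K V X = 0 := by
  have hconj : (ω.toDual hnd).conj (-X) = Module.Dual.transpose X := by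
    ext φ w
    have hskew := (mem_skewAdjointSubmodule X).1 hX ((ω.toDual hnd).symm φ) w
    simp [LinearEquiv.conj_apply, toDual_def, hskew, Module.Dual.transpose_apply]
  have htrace := trace_conj' (-X) (ω.toDual hnd)
  rw [hconj, map_neg, trace_transpose'] at htrace
  have h2 : (2 : K) * trace K V X = 0 := by linear_combination htrace
  exact (mul_eq_zero.1 h2).resolve_left two_ne_zero

theorem exists_mem_skewAdjointSubmodule_apply_eq_and_comp_eq_on_ker (hω : ω.IsAlt)
    (hnd : ω.Nondegenerate) {e : V} {f : Module.Dual K V} (hfe : f e = 1) (m : V)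
    (ψ : Module.Dual K V) :
    ∃ X ∈ ω.skewAdjointSubmodule, X e = m ∧ ∀ u, f u = 0 → f (X u) = ψ u := by
  set a := (ω.toDual hnd).symm f
  set c := (ω.toDual hnd).symm (ψ - ψ e • f)
  have ha (v : V) : ω a v = f v := apply_toDual_symm_apply _ v
  have hc (v : V) : ω c v = ψ v - ψ e * f v := apply_toDual_symm_apply _ v
  have hfa : f a = 0 := by rw [← ha, hω]
  -- Since `ω a e = 1`, the first three terms send `e` to `m` and are killed by `f` on `ker f`;
  -- since `ω c e = 0`, the last two vanish at `e`, and `f` of them is `ω c = ψ` on `ker f`.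
  refine ⟨(ω a).smulRight m + (ω m).smulRight a - ω m e • (ω a).smulRight a
      + ((ω c).smulRight e + (ω e).smulRight c) - ω a c • (ω e).smulRight e, ?_, ?_, ?_⟩
  · exact sub_mem (add_mem (sub_mem (smulRight_add_smulRight_mem_skewAdjointSubmodule hω a m)
      (Submodule.smul_mem _ _ (smulRight_self_mem_skewAdjointSubmodule hω a)))
      (smulRight_add_smulRight_mem_skewAdjointSubmodule hω c e))
      (Submodule.smul_mem _ _ (smulRight_self_mem_skewAdjointSubmodule hω e))
  · simp [ha, hc, hfe, hω e]
  · intro u hu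
    simp only [LinearMap.sub_apply, LinearMap.add_apply, coe_smulRight, smul_apply, map_sub,
      map_add, map_smul, smul_eq_mul, ha, hc, hu, hfa, hfe, zero_smul, zero_add, smul_zero,
      sub_zero, mul_zero, mul_one]
    ring

end LinearMap.BilinForm

theorem Submodule.exists_dual_apply_eq_one_and_ker_eq {K V : Type*} [Field K] [AddCommGroup V]
    [Module K V] {U : Submodule K V} {e : V} (hc : IsCompl U (span K {e})) (he : e ≠ 0) :
    ∃ f : Module.Dual K V, f e = 1 ∧ LinearMap.ker f = U := by
  refine ⟨(LinearEquiv.coord K V e he : span K {e} →ₗ[K] K) ∘ₗ projectionOnto _ _ hc.symm, ?_, ?_⟩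
  · have hproj := projectionOnto_apply_left hc.symm ⟨e, mem_span_singleton_self e⟩
    rw [LinearMap.comp_apply, LinearEquiv.coe_coe, hproj, LinearEquiv.coord_self]
  · rw [LinearEquiv.ker_comp, ker_projectionOnto]

/-- Lie algebra factorization `𝔰𝔩(V) = 𝔰𝔭(V) + 𝔰𝔩_{dim V − 1}` (Lie-algebra form
of the first row of Onishchik's Table O): every trace-zero endomorphism `M` of
`V` is a sum `X + Y` with `X` infinitesimally symplectic and `Y` a trace-zero
endomorphism annihilating `e` and preserving the complementary hyperplane `U`. -/
theorem sl_eq_sp_add_sl_factorization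
    (V : Type*) [AddCommGroup V] [Module ℂ V] [FiniteDimensional ℂ V]
    (ω : BilinForm ℂ V) (halt : ∀ v : V, ω v v = 0) (hnd : ω.Nondegenerate)
    (e : V) (he : e ≠ 0) (U : Submodule ℂ V) (hc : IsCompl U (Submodule.span ℂ {e})) :
    ∀ M : V →ₗ[ℂ] V, LinearMap.trace ℂ V M = 0 →
      ∃ X Y : V →ₗ[ℂ] V,
        (∀ v w : V, ω (X v) w + ω v (X w) = 0) ∧
        Y e = 0 ∧
        (∀ u ∈ U, Y u ∈ U) ∧
        LinearMap.trace ℂ V Y = 0 ∧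
        M = X + Y := by
  intro M hM
  obtain ⟨f, hfe, hker⟩ := Submodule.exists_dual_apply_eq_one_and_ker_eq hc he
  obtain ⟨X, hX, hXe, hXf⟩ :=
    ω.exists_mem_skewAdjointSubmodule_apply_eq_and_comp_eq_on_ker halt hnd hfe (M e) (f ∘ₗ M)
  refine ⟨X, M - X, fun v w => ?_, by simp [hXe], fun u hu => ?_, ?_, (add_sub_cancel X M).symm⟩
  · simp [(LinearMap.mem_skewAdjointSubmodule X).1 hX v w]
  · rw [← hker] at hu ⊢
    simp [hXf u hu]
  · rw [map_sub, hM, ω.trace_eq_zero_of_mem_skewAdjointSubmodule hnd hX, sub_zero]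
end
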